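/- Suppose 0 ∉ B (a compact base of K*) and let μ := min over λ ∈ B of min_i |λ_i| > 0 and M := max over λ ∈ B of ‖Σ_i λ_i (ā_i, b̄_i)‖. Then the admissible set C(Ā, b̄) is bounded: C(Ā, b̄) ⊆ (M/μ)·B_m, the closed ball of radius M/μ in ℝ^m. -/

import Mathlib

open Finset Pointwise

noncomputable def euclNorm {k : ℕ} (v : Fin k → ℝ) : ℝ := Real.sqrt (∑ i, v i ^ 2)

def coneHull {k : ℕ} (X : Set (Fin k → ℝ)) : Set (Fin k → ℝ) :=
  {y | y = 0 ∨ ∃ t : ℝ, 0 ≤ t ∧ ∃ c ∈ convexHull ℝ X, y = t • c}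

def dualCone {m : ℕ} (K : Set (Fin m → ℝ)) : Set (Fin m → ℝ) :=
  {a | ∀ x ∈ K, 0 ≤ ∑ i, a i * x i}

def Feas {m n : ℕ} (K : Set (Fin m → ℝ)) (Abar : Fin m → Fin n → ℝ) (bbar : Fin m → ℝ)
    (r : Fin m → ℝ) : Set (Fin n → ℝ) :=
  {x | ∀ (a : Fin m → Fin n → ℝ) (b : Fin m → ℝ),
      (∀ i, euclNorm (Fin.snoc (a i - Abar i) (b i - bbar i)) ≤ r i) →
      (fun i => (∑ j, a i j * x j) + b i) ∈ -K}

def Adm {m n : ℕ} (K : Set (Fin m → ℝ)) (Abar : Fin m → Fin n → ℝ) (bbar : Fin m → ℝ) :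
    Set (Fin m → ℝ) :=
  {r | (∀ i, 0 ≤ r i) ∧ (Feas K Abar bbar r).Nonempty}

noncomputable def rrf {m n : ℕ} (K : Set (Fin m → ℝ)) (Abar : Fin m → Fin n → ℝ)
    (bbar : Fin m → ℝ) : ℝ :=
  sSup {α : ℝ | 0 ≤ α ∧ (fun _ => α) ∈ Adm K Abar bbar}

def Epi {m n : ℕ} (Abar : Fin m → Fin n → ℝ) (bbar : Fin m → ℝ) (B : Set (Fin m → ℝ)) :
    Set (Fin (n + 1) → ℝ) :=
  {y | ∃ l ∈ B, ∃ w : ℝ, 0 ≤ w ∧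
    y = Fin.snoc (fun j => ∑ i, l i * Abar i j) (-(∑ i, l i * bbar i) + w)}

noncomputable def edist0 {m n : ℕ} (Abar : Fin m → Fin n → ℝ) (bbar : Fin m → ℝ)
    (B : Set (Fin m → ℝ)) : ℝ :=
  sInf {t : ℝ | ∃ y ∈ Epi Abar bbar B, t = euclNorm y}

def IsCompactBase {m : ℕ} (C B : Set (Fin m → ℝ)) : Prop :=
  IsCompact B ∧ Convex ℝ B ∧ B ⊆ C ∧ (0 : Fin m → ℝ) ∉ B ∧
    C = {y | ∃ t : ℝ, 0 ≤ t ∧ ∃ b ∈ B, y = t • b}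

def IsClosedConvexCone {m : ℕ} (K : Set (Fin m → ℝ)) : Prop :=
  IsClosed K ∧ Convex ℝ K ∧ ∀ t : ℝ, 0 ≤ t → ∀ x ∈ K, t • x ∈ K

noncomputable def c1 {m : ℕ} (n : ℕ) (B : Set (Fin m → ℝ)) : ℝ :=
  (sSup {t : ℝ | ∃ l ∈ B, ∃ u : Fin m → (Fin (n + 1) → ℝ),
    (∀ i, euclNorm (u i) ≤ 1) ∧ t = euclNorm (∑ i, l i • u i)})⁻¹

noncomputable def c2 {m : ℕ} (B : Set (Fin m → ℝ)) : ℝ :=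
  (sInf {t : ℝ | ∃ l ∈ B, t = ∑ i, |l i|})⁻¹

/-!
Take a point `x` feasible for `r` and any `l ∈ B ⊆ K*`. Perturbing the `i`-th row of `(Ā, b̄)` by
`r i` along the unit vector `sign (l i) • (x, 1) / ‖(x, 1)‖` keeps it in the uncertainty set, so
pairing the resulting constraint vector with `l` gives
`Σ |l i| r i · ‖(x, 1)‖ ≤ -⟪Σ l i (ā_i, b̄_i), (x, 1)⟫ ≤ ‖Σ l i (ā_i, b̄_i)‖ · ‖(x, 1)‖`
by Cauchy–Schwarz. Hence `μ ‖r‖ ≤ μ Σ r i ≤ Σ |l i| r i ≤ M`.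
-/

lemma euclNorm_eq_norm {k : ℕ} (v : Fin k → ℝ) :
    euclNorm v = ‖(WithLp.toLp 2 v : EuclideanSpace ℝ (Fin k))‖ := by
  simp [euclNorm, EuclideanSpace.norm_eq]

lemma euclNorm_smul {k : ℕ} (c : ℝ) (v : Fin k → ℝ) : euclNorm (c • v) = |c| * euclNorm v := by
  simp [euclNorm_eq_norm, WithLp.toLp_smul, norm_smul]

lemma euclNorm_pos {k : ℕ} {v : Fin k → ℝ} (hv : v ≠ 0) : 0 < euclNorm v := by
  simpa [euclNorm_eq_norm] using hv

lemma dotProduct_le_euclNorm_mul {k : ℕ} (v w : Fin k → ℝ) : v ⬝ᵥ w ≤ euclNorm v * euclNorm w := by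
  simpa [euclNorm_eq_norm, EuclideanSpace.inner_toLp_toLp, dotProduct_comm] using
    real_inner_le_norm (WithLp.toLp 2 v : EuclideanSpace ℝ (Fin k)) (WithLp.toLp 2 w)

lemma euclNorm_le_sum {k : ℕ} {r : Fin k → ℝ} (hr : ∀ i, 0 ≤ r i) : euclNorm r ≤ ∑ i, r i :=
  (Real.sqrt_le_left (Finset.sum_nonneg fun i _ => hr i)).mpr
    (Finset.sum_sq_le_sq_sum_of_nonneg fun i _ => hr i)

lemma euclNorm_neg {k : ℕ} (v : Fin k → ℝ) : euclNorm (-v) = euclNorm v := by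
  simpa using euclNorm_smul (-1) v

lemma euclNorm_sq {k : ℕ} (v : Fin k → ℝ) : euclNorm v ^ 2 = v ⬝ᵥ v := by
  rw [euclNorm, Real.sq_sqrt (Finset.sum_nonneg fun i _ => sq_nonneg _)]
  simp [dotProduct, sq]

lemma continuous_euclNorm {k : ℕ} : Continuous (euclNorm (k := k)) := by
  simp_rw [funext euclNorm_eq_norm]; fun_prop

lemma snoc_dotProduct_snoc_one {n : ℕ} (a x : Fin n → ℝ) (b : ℝ) :
    (Fin.snoc a b : Fin (n + 1) → ℝ) ⬝ᵥ Fin.snoc x 1 = a ⬝ᵥ x + b := by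
  simp [dotProduct, Fin.sum_univ_castSucc]

lemma snoc_add_smul_snoc_one {n : ℕ} (a x : Fin n → ℝ) (b c : ℝ) :
    (Fin.snoc (a + c • x) (b + c) : Fin (n + 1) → ℝ) = Fin.snoc a b + c • Fin.snoc x 1 := by
  ext i; induction i using Fin.lastCases <;> simp

section Feas

variable {m n : ℕ} {K : Set (Fin m → ℝ)} {Abar : Fin m → Fin n → ℝ} {bbar : Fin m → ℝ}
  {r : Fin m → ℝ} {x : Fin n → ℝ} {l : Fin m → ℝ}

lemma sum_mul_nonpos_of_mem_Feas (hl : l ∈ dualCone K) (hx : x ∈ Feas K Abar bbar r)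
    {a : Fin m → Fin n → ℝ} {b : Fin m → ℝ}
    (hab : ∀ i, euclNorm (Fin.snoc (a i - Abar i) (b i - bbar i)) ≤ r i) :
    ∑ i, l i * (a i ⬝ᵥ x + b i) ≤ 0 := by
  have := hl _ (Set.mem_neg.mp (hx a b hab))
  simp only [Pi.neg_apply, mul_neg, Finset.sum_neg_distrib, neg_nonneg] at this
  exact this

lemma sum_abs_mul_le_of_mem_Feas (hl : l ∈ dualCone K) (hr : ∀ i, 0 ≤ r i)
    (hx : x ∈ Feas K Abar bbar r) :
    ∑ i, |l i| * r i ≤ euclNorm (∑ i, l i • (Fin.snoc (Abar i) (bbar i) : Fin (n + 1) → ℝ)) := by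
  set u : Fin (n + 1) → ℝ := Fin.snoc x 1
  set v : Fin m → Fin (n + 1) → ℝ := fun i => Fin.snoc (Abar i) (bbar i)
  set N := euclNorm u
  have hN : 0 < N := euclNorm_pos fun h => by simpa [u] using congr_fun h (Fin.last n)
  -- worst-case perturbation: row `i` moves by `r i` along `±u / ‖u‖`, with the sign of `l i`
  set c : Fin m → ℝ := fun i => SignType.sign (l i) * r i / N
  have hshift : ∀ i, (Fin.snoc (c i • x) (c i) : Fin (n + 1) → ℝ) = c i • u := fun i => by
    ext j; induction j using Fin.lastCases <;> simp [u]
  have hball : ∀ i,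
      euclNorm (Fin.snoc ((Abar i + c i • x) - Abar i) ((bbar i + c i) - bbar i)) ≤ r i := by
    intro i
    rw [add_sub_cancel_left, add_sub_cancel_left, hshift, euclNorm_smul, abs_div, abs_mul,
      abs_of_pos hN, div_mul_cancel₀ _ hN.ne', abs_of_nonneg (hr i)]
    exact mul_le_of_le_one_left (hr i) (by rcases lt_trichotomy (l i) 0 with h | h | h <;> simp [h])
  have hrow : ∀ i, (Abar i + c i • x) ⬝ᵥ x + (bbar i + c i) =
      v i ⬝ᵥ u + SignType.sign (l i) * r i * N := by
    intro i
    have hcN : c i * N ^ 2 = SignType.sign (l i) * r i * N := by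
      simp only [c]; field_simp
    rw [← snoc_dotProduct_snoc_one, snoc_add_smul_snoc_one, add_dotProduct, smul_dotProduct,
      smul_eq_mul, ← euclNorm_sq]
    exact congrArg (v i ⬝ᵥ u + ·) hcN
  have hpair := sum_mul_nonpos_of_mem_Feas hl hx hball
  simp only [hrow, mul_add, Finset.sum_add_distrib] at hpair
  have hlin : ∑ i, l i * (v i ⬝ᵥ u) = (∑ i, l i • v i) ⬝ᵥ u := by
    simp only [sum_dotProduct, smul_dotProduct, smul_eq_mul]
  have habs : ∑ i, l i * (SignType.sign (l i) * r i * N) = (∑ i, |l i| * r i) * N := by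
    rw [Finset.sum_mul]
    exact Finset.sum_congr rfl fun i _ => by rw [← self_mul_sign]; ring
  have hcs : -((∑ i, l i • v i) ⬝ᵥ u) ≤ euclNorm (∑ i, l i • v i) * N := by
    simpa only [neg_dotProduct, euclNorm_neg] using dotProduct_le_euclNorm_mul (-∑ i, l i • v i) u
  exact le_of_mul_le_mul_right (by linarith) hN

end Feas

lemma mul_euclNorm_le_sum_abs_mul {k : ℕ} {μ : ℝ} {l r : Fin k → ℝ} (hμ : 0 ≤ μ)
    (hμl : ∀ i, μ ≤ |l i|) (hr : ∀ i, 0 ≤ r i) : μ * euclNorm r ≤ ∑ i, |l i| * r i :=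
  calc μ * euclNorm r ≤ μ * ∑ i, r i := mul_le_mul_of_nonneg_left (euclNorm_le_sum hr) hμ
    _ = ∑ i, μ * r i := Finset.mul_sum ..
    _ ≤ ∑ i, |l i| * r i := Finset.sum_le_sum fun i _ => mul_le_mul_of_nonneg_right (hμl i) (hr i)

lemma le_sSup_of_isCompact {α : Type*} [TopologicalSpace α] {B : Set α} (hB : IsCompact B)
    {f : α → ℝ} (hf : Continuous f) {l : α} (hl : l ∈ B) : f l ≤ sSup {t | ∃ l ∈ B, t = f l} :=
  le_csSup ((hB.bddAbove_image hf.continuousOn).mono (by rintro _ ⟨l, hl, rfl⟩; exact ⟨l, hl, rfl⟩))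
    ⟨l, hl, rfl⟩

lemma sInf_abs_apply_le {m : ℕ} {B : Set (Fin m → ℝ)} {l : Fin m → ℝ} (hl : l ∈ B) (i : Fin m) :
    sInf {t : ℝ | ∃ l ∈ B, ∃ i : Fin m, t = |l i|} ≤ |l i| :=
  csInf_le ⟨0, by rintro _ ⟨_, _, _, rfl⟩; exact abs_nonneg _⟩ ⟨l, hl, i, rfl⟩

theorem statement10_general {m n : ℕ} (K : Set (Fin m → ℝ))
    (B : Set (Fin m → ℝ)) (hB : IsCompactBase (dualCone K) B)
    (Abar : Fin m → Fin n → ℝ) (bbar : Fin m → ℝ)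
    (hμ : 0 < sInf {t : ℝ | ∃ l ∈ B, ∃ i : Fin m, t = |l i|}) :
    Adm K Abar bbar ⊆ {r : Fin m → ℝ | euclNorm r ≤
      (sSup {t : ℝ | ∃ l ∈ B, t = euclNorm (∑ i, l i • (Fin.snoc (Abar i) (bbar i) : Fin (n + 1) → ℝ))}) /
        sInf {t : ℝ | ∃ l ∈ B, ∃ i : Fin m, t = |l i|}} := by
  rintro r ⟨hr, x, hx⟩
  obtain ⟨l, hl⟩ : B.Nonempty := Set.nonempty_iff_ne_empty.2 fun h => by simp [h] at hμ
  have hμl := mul_euclNorm_le_sum_abs_mul hμ.le (sInf_abs_apply_le hl) hr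
  have hlr := sum_abs_mul_le_of_mem_Feas (hB.2.2.1 hl) hr hx
  have hM := le_sSup_of_isCompact hB.1 (f := fun l : Fin m → ℝ =>
      euclNorm (∑ i, l i • (Fin.snoc (Abar i) (bbar i) : Fin (n + 1) → ℝ)))
    (continuous_euclNorm.comp (by fun_prop)) hl
  refine (le_div_iff₀ hμ).2 ?_
  linarith

/-- boundedness of the admissible set. -/
theorem statement10 {m n : ℕ} (K : Set (Fin m → ℝ)) (hclosed : IsClosed K) (hconv : Convex ℝ K)
    (hcone : ∀ t : ℝ, 0 ≤ t → ∀ x ∈ K, t • x ∈ K) (hint : (interior K).Nonempty)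
    (B : Set (Fin m → ℝ)) (hB : IsCompactBase (dualCone K) B)
    (Abar : Fin m → Fin n → ℝ) (bbar : Fin m → ℝ)
    (hμ : 0 < sInf {t : ℝ | ∃ l ∈ B, ∃ i : Fin m, t = |l i|}) :
    Adm K Abar bbar ⊆ {r : Fin m → ℝ | euclNorm r ≤
      (sSup {t : ℝ | ∃ l ∈ B, t = euclNorm (∑ i, l i • (Fin.snoc (Abar i) (bbar i) : Fin (n + 1) → ℝ))}) /
        sInf {t : ℝ | ∃ l ∈ B, ∃ i : Fin m, t = |l i|}} :=
  statement10_general K B hB Abar bbar hμ
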